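/- In the splitting gadget NFA with m agents, Player 2 can ensure that the configuration with all agents in f is not reached within the first 2·⌊log₂ m⌋ + 1 steps: no strategy of Player 1 wins in fewer than 2·⌊log₂ m⌋ + 1 steps. -/

import Mathlib

/-- States of the splitting gadget. -/
inductive SQ : Type
  | q0 | q1 | q2 | tgt
deriving DecidableEq

/-- Alphabet of the splitting gadget: a, b and δ. -/
inductive SA : Type
  | a | b | d
deriving DecidableEq

/-- Transitions of the splitting gadget: δ splits q0 to q1 or q2 and loops on q1, q2;
a,b loop on q0; a sends q1 to the target and q2 back to q0; b symmetrically;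
every letter loops on the target. -/
def splitD : SQ → SA → SQ → Prop
  | .q0, .d, .q1 => True
  | .q0, .d, .q2 => True
  | .q0, .a, .q0 => True
  | .q0, .b, .q0 => True
  | .q1, .d, .q1 => True
  | .q1, .a, .tgt => True
  | .q1, .b, .q0 => True
  | .q2, .d, .q2 => True
  | .q2, .b, .tgt => True
  | .q2, .a, .q0 => True
  | .tgt, _, .tgt => True
  | _, _, _ => False

/-!
Player 2 answers a δ from `q₀` by sending half of the agents in `q₀` to `q₁` and the other
half to `q₂`. Whichever of `a`, `b` Player 1 plays next, one of these halves goes back to `q₀`,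
so every two steps cost Player 2 at most half of the agents it keeps in play. Precisely, after
`n` steps at least `m / 2 ^ (n / 2)` agents are in `q₀`, or at least `m / 2 ^ ((n + 1) / 2)`
agents are in each of `q₁` and `q₂`; both bounds stay positive while `n ≤ 2 ⌊log₂ m⌋`.
-/

namespace SplitGadget

section Play

variable {C A : Type*}

def play (σ : List (C × A) → C → A) (resp : C → A → C) (c₀ : C) : ℕ → List (C × A) × C
  | 0 => ([], c₀)
  | n + 1 =>
    let p := play σ resp c₀ n
    (p.1 ++ [(p.2, σ p.1 p.2)], resp p.2 (σ p.1 p.2))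

theorem play_fst (σ : List (C × A) → C → A) (resp : C → A → C) (c₀ : C) (n : ℕ) :
    (play σ resp c₀ n).1 = List.ofFn fun i : Fin n =>
      ((play σ resp c₀ i).2, σ (play σ resp c₀ i).1 (play σ resp c₀ i).2) := by
  induction n with
  | zero => rfl
  | succ n ih =>
    rw [List.ofFn_succ', List.concat_eq_append]
    exact congrArg (· ++ _) ih

theorem exists_play (σ : List (C × A) → C → A) (resp : C → A → C) (c₀ : C) :
    ∃ (ρ : ℕ → C) (acts : ℕ → A), ρ 0 = c₀ ∧
      (∀ n, acts n = σ (List.ofFn fun i : Fin n => (ρ i, acts i)) (ρ n)) ∧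
      ∀ n, ρ (n + 1) = resp (ρ n) (acts n) :=
  ⟨fun n => (play σ resp c₀ n).2, fun n => σ (play σ resp c₀ n).1 (play σ resp c₀ n).2, rfl,
    fun n => congrArg (σ · _) (play_fst σ resp c₀ n), fun _ => rfl⟩

end Play

def agentStep : Bool → SQ → SA → SQ
  | true, .q0, .d => .q2
  | false, .q0, .d => .q1
  | _, .q1, .a => .tgt
  | _, .q1, .b => .q0
  | _, .q2, .a => .q0
  | _, .q2, .b => .tgt
  | _, s, _ => s

theorem splitD_agentStep (toQ₂ : Bool) (s : SQ) (x : SA) : splitD s x (agentStep toQ₂ s x) := by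
  cases toQ₂ <;> cases s <;> cases x <;> trivial

section Count

variable {ι : Type*} [Fintype ι]

def count (c : ι → SQ) (s : SQ) : ℕ := (Finset.univ.filter fun j => c j = s).card

theorem count_le_count {c c' : ι → SQ} {s s' : SQ} (h : ∀ j, c j = s → c' j = s') :
    count c s ≤ count c' s' :=
  Finset.card_le_card (Finset.monotone_filter_right _ fun j _ => h j)

theorem exists_ne_tgt_of_count_pos {c : ι → SQ} {s : SQ} (hs : s ≠ .tgt) (h : 0 < count c s) :
    ∃ j, c j ≠ .tgt := by
  obtain ⟨j, hj⟩ := Finset.card_pos.mp h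
  exact ⟨j, (Finset.mem_filter.mp hj).2 ▸ hs⟩

noncomputable def splitHalf (c : ι → SQ) : Finset ι :=
  (Finset.exists_subset_card_eq (Nat.div_le_self (count c .q0) 2)).choose

theorem splitHalf_subset (c : ι → SQ) :
    splitHalf c ⊆ Finset.univ.filter fun j => c j = .q0 :=
  (Finset.exists_subset_card_eq (Nat.div_le_self (count c .q0) 2)).choose_spec.1

theorem card_splitHalf (c : ι → SQ) : (splitHalf c).card = count c .q0 / 2 :=
  (Finset.exists_subset_card_eq (Nat.div_le_self (count c .q0) 2)).choose_spec.2

variable [DecidableEq ι]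

noncomputable def respond (c : ι → SQ) (x : SA) : ι → SQ :=
  fun j => agentStep (decide (j ∈ splitHalf c)) (c j) x

theorem splitD_respond (c : ι → SQ) (x : SA) (j : ι) : splitD (c j) x (respond c x j) :=
  splitD_agentStep _ _ _

theorem count_q0_le_respond {x : SA} (hx : x ≠ .d) (c : ι → SQ) :
    count c .q0 ≤ count (respond c x) .q0 :=
  count_le_count fun j hj => by cases x <;> simp_all [respond, agentStep]

theorem count_q2_le_respond_a (c : ι → SQ) : count c .q2 ≤ count (respond c .a) .q0 :=
  count_le_count fun j hj => by simp [respond, agentStep, hj]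

theorem count_q1_le_respond_b (c : ι → SQ) : count c .q1 ≤ count (respond c .b) .q0 :=
  count_le_count fun j hj => by simp [respond, agentStep, hj]

theorem count_le_respond_d {s : SQ} (hs : s = .q1 ∨ s = .q2) (c : ι → SQ) :
    count c s ≤ count (respond c .d) s :=
  count_le_count fun j hj => by rcases hs with rfl | rfl <;> simp [respond, agentStep, hj]

theorem count_q0_div_two_le_respond_d (c : ι → SQ) :
    count c .q0 / 2 ≤ count (respond c .d) .q1 ∧ count c .q0 / 2 ≤ count (respond c .d) .q2 := by
  constructor
  · calc count c .q0 / 2 ≤ count c .q0 - (splitHalf c).card := by rw [card_splitHalf]; omega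
      _ = ((Finset.univ.filter fun j => c j = .q0) \ splitHalf c).card :=
        (Finset.card_sdiff_of_subset (splitHalf_subset c)).symm
      _ ≤ count (respond c .d) .q1 := Finset.card_le_card fun j hj => by
        obtain ⟨hj0, hjS⟩ := Finset.mem_sdiff.mp hj
        refine Finset.mem_filter.mpr ⟨Finset.mem_univ j, ?_⟩
        simp [respond, agentStep, (Finset.mem_filter.mp hj0).2, hjS]
  · rw [← card_splitHalf]
    exact Finset.card_le_card fun j hj => by
      refine Finset.mem_filter.mpr ⟨Finset.mem_univ j, ?_⟩
      simp [respond, agentStep, hj, (Finset.mem_filter.mp (splitHalf_subset c hj)).2]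

end Count

section Invariant

variable {ι : Type*} [Fintype ι]

def HalvingBound (N n : ℕ) (c : ι → SQ) : Prop :=
  N / 2 ^ (n / 2) ≤ count c .q0 ∨
    (N / 2 ^ ((n + 1) / 2) ≤ count c .q1 ∧ N / 2 ^ ((n + 1) / 2) ≤ count c .q2)

theorem div_two_pow_antitone (N : ℕ) : Antitone fun k => N / 2 ^ k := fun _ _ hkl =>
  Nat.div_le_div_left (Nat.pow_le_pow_right two_pos hkl) (Nat.pow_pos two_pos)

theorem HalvingBound.exists_ne_tgt {N n : ℕ} {c : ι → SQ} (h : HalvingBound N n c) (hN : N ≠ 0)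
    (hn : n ≤ 2 * Nat.log 2 N) : ∃ j, c j ≠ .tgt := by
  have hpos : ∀ k ≤ Nat.log 2 N, 0 < N / 2 ^ k := fun k hk =>
    Nat.div_pos (Nat.pow_le_of_le_log hN hk) (Nat.pow_pos two_pos)
  rcases h with hq0 | ⟨hq1, -⟩
  · exact exists_ne_tgt_of_count_pos (by decide) ((hpos _ (by omega)).trans_le hq0)
  · exact exists_ne_tgt_of_count_pos (by decide) ((hpos _ (by omega)).trans_le hq1)

variable [DecidableEq ι]

theorem HalvingBound.respond {N n : ℕ} {c : ι → SQ} (h : HalvingBound N n c) (x : SA) :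
    HalvingBound N (n + 1) (respond c x) := by
  have hmono := div_two_pow_antitone N (show n / 2 ≤ (n + 1) / 2 by omega)
  unfold HalvingBound
  rcases x with _ | _ | _ <;> rcases h with hq0 | ⟨hq1, hq2⟩
  · exact .inl (hmono.trans (hq0.trans (count_q0_le_respond (by decide) c)))
  · exact .inl (hq2.trans (count_q2_le_respond_a c))
  · exact .inl (hmono.trans (hq0.trans (count_q0_le_respond (by decide) c)))
  · exact .inl (hq1.trans (count_q1_le_respond_b c))
  · have hhalf : N / 2 ^ ((n + 1 + 1) / 2) ≤ count c .q0 / 2 := by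
      rw [show (n + 1 + 1) / 2 = n / 2 + 1 by omega, pow_succ, ← Nat.div_div_eq_div_mul]
      exact Nat.div_le_div_right hq0
    obtain ⟨h1, h2⟩ := count_q0_div_two_le_respond_d c
    exact .inr ⟨hhalf.trans h1, hhalf.trans h2⟩
  · have hmono' := div_two_pow_antitone N (show (n + 1) / 2 ≤ (n + 1 + 1) / 2 by omega)
    exact .inr ⟨hmono'.trans (hq1.trans (count_le_respond_d (.inl rfl) c)),
      hmono'.trans (hq2.trans (count_le_respond_d (.inr rfl) c))⟩

theorem halvingBound_of_respond {ρ : ℕ → ι → SQ} {acts : ℕ → SA} (h₀ : ρ 0 = fun _ => .q0)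
    (hstep : ∀ n, ρ (n + 1) = respond (ρ n) (acts n)) (n : ℕ) :
    HalvingBound (Fintype.card ι) n (ρ n) := by
  induction n with
  | zero => left; simp [h₀, count]
  | succ n ih => rw [hstep]; exact ih.respond _

end Invariant

end SplitGadget

/-- In the splitting gadget with m agents, no strategy of Player 1 wins in fewer than
2⌊log₂ m⌋ + 1 steps: Player 2 can keep some agent outside the target during all of the
first 2⌊log₂ m⌋ + 1 steps. -/
theorem stmt14 (m : ℕ) (hm : 0 < m) :
    ∀ σ : List ((Fin m → SQ) × SA) → (Fin m → SQ) → SA,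
      ∃ (ρ : ℕ → (Fin m → SQ)) (acts : ℕ → SA),
        ρ 0 = (fun _ => SQ.q0) ∧
        (∀ n, acts n = σ (List.ofFn (fun i : Fin n => (ρ i.1, acts i.1))) (ρ n)) ∧
        (∀ n j, splitD (ρ n j) (acts n) (ρ (n + 1) j)) ∧
        ∀ n, n < 2 * Nat.log 2 m + 1 → ∃ j, ρ n j ≠ SQ.tgt := by
  intro σ
  obtain ⟨ρ, acts, h₀, hacts, hstep⟩ :=
    SplitGadget.exists_play σ SplitGadget.respond fun _ => SQ.q0
  refine ⟨ρ, acts, h₀, hacts, fun n j => hstep n ▸ SplitGadget.splitD_respond _ _ j,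
    fun n hn => ?_⟩
  have hbound := SplitGadget.halvingBound_of_respond h₀ hstep n
  rw [Fintype.card_fin] at hbound
  exact hbound.exists_ne_tgt hm.ne' (by omega)
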